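/- Let R be a commutative ring and n ≥ 2. Let f ∈ R[[X₁,...,Xₙ]] be a power series not involving X₁ (every monomial with nonzero coefficient has X₁-exponent 0) all of whose monomials have total degree ≥ 2. Then any α ∈ GA^c_n(R) with α(X₁) = X₁(1+f) = X₁ + X₁f and α(Xᵢ) = Xᵢ for i = 2,...,n is a single commutator: there exist β, γ ∈ GA^c_n(R) with α = β∘γ∘β⁻¹∘γ⁻¹. -/

import Mathlib

/-!
Let `β` send `X₁ ↦ X₁ (1 + X₂)` and `γ` send `X₂ ↦ (X₂ - f) / (1 + f)`, both fixing the other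
variables. Since `α` and `β` fix every variable but `X₁` and `f` does not involve `X₁`, both fix
`f`, and a computation on the generators gives `α ∘ γ ∘ β = β ∘ γ`, i.e. `α = [β, γ]`: continuous
automorphisms are determined by their values on the generators.

The substance is that `γ` is an automorphism at all. A substitution `a` with every `a s - X s` of
order `≥ 2` satisfies `order (subst a F - F) > order F`, and for any additive `T` raising the
order, `1 - T` is bijective, with inverse `∑ Tʲ`, which converges coefficientwise.
-/

open MvPowerSeries

/-- The topology of coefficientwise convergence on `R[[X₁,…,Xₙ]]` (with `R` discrete):
the product topology on the coefficient functions, `R` carrying the discrete topology. -/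
noncomputable def mvPiTopology (σ R : Type*) : TopologicalSpace (MvPowerSeries σ R) :=
  @Pi.topologicalSpace (σ →₀ ℕ) (fun _ => R) (fun _ => ⊥)

/-- The augmentation ideal `M = (X₁,…,Xₙ)` of `R[[X₁,…,Xₙ]]`, i.e. the ideal generated
by the variables; it consists of the power series with zero constant term. -/
noncomputable def augIdeal (σ R : Type*) [CommRing R] : Ideal (MvPowerSeries σ R) :=
  Ideal.span (Set.range (X : σ → MvPowerSeries σ R))

/-- `GA^c_n(R)`: an `R`-algebra automorphism of `R[[X₁,…,Xₙ]]` belongs to `GA^c_n(R)` iff it is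
continuous for the topology of coefficientwise convergence and augmented, i.e. each `φ(Xᵢ)` has
zero constant coefficient. -/
noncomputable def GAc {R : Type*} [CommRing R] {n : ℕ}
    (φ : MvPowerSeries (Fin n) R ≃ₐ[R] MvPowerSeries (Fin n) R) : Prop :=
  @Continuous _ _ (mvPiTopology (Fin n) R) (mvPiTopology (Fin n) R) φ ∧
    ∀ i, constantCoeff (φ (X i)) = 0

/-- `GI^c_n(R)`: those `φ ∈ GA^c_n(R)` with `φ(Xᵢ) - Xᵢ ∈ M²` for all `i`. -/
noncomputable def GIc {R : Type*} [CommRing R] {n : ℕ}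
    (φ : MvPowerSeries (Fin n) R ≃ₐ[R] MvPowerSeries (Fin n) R) : Prop :=
  GAc φ ∧ ∀ i, φ (X i) - X i ∈ (augIdeal (Fin n) R) ^ 2

/-- Membership in `[GA^c_n(R), GA^c_n(R)]^{(k)}`: `α` is a product of `k` commutators
`[β,γ] = β∘γ∘β⁻¹∘γ⁻¹` of elements of `GA^c_n(R)`.  (The group structure on automorphisms is
composition: `(β * γ) f = β (γ f)`.) -/
noncomputable def IsProdOfCommutators {R : Type*} [CommRing R] {n : ℕ} (k : ℕ)
    (α : MvPowerSeries (Fin n) R ≃ₐ[R] MvPowerSeries (Fin n) R) : Prop :=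
  ∃ β γ : Fin k → (MvPowerSeries (Fin n) R ≃ₐ[R] MvPowerSeries (Fin n) R),
    (∀ j, GAc (β j) ∧ GAc (γ j)) ∧
    α = (List.ofFn (fun j => β j * γ j * (β j)⁻¹ * (γ j)⁻¹)).prod

namespace MvPowerSeries

variable {σ R : Type*} [CommRing R]

section Order

theorem le_order_mul_sub_mul {x x' y y' : MvPowerSeries σ R} {k l : ℕ∞}
    (hx : k ≤ x.order) (hx' : k + 1 ≤ (x' - x).order)
    (hy : l ≤ y.order) (hy' : l + 1 ≤ (y' - y).order) :
    k + l + 1 ≤ (x' * y' - x * y).order := by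
  have hy'' : l ≤ y'.order :=
    calc l ≤ min y.order (y' - y).order := le_min hy (le_self_add.trans hy')
      _ ≤ (y + (y' - y)).order := min_order_le_add
      _ = y'.order := by rw [add_sub_cancel]
  calc k + l + 1 ≤ min ((x' - x) * y').order (x * (y' - y)).order := by
        refine le_min ?_ ?_
        · calc k + l + 1 = k + 1 + l := add_right_comm _ _ _
            _ ≤ (x' - x).order + y'.order := add_le_add hx' hy''
            _ ≤ _ := le_order_mul
        · calc k + l + 1 = k + (l + 1) := add_assoc _ _ _
            _ ≤ x.order + (y' - y).order := add_le_add hx hy'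
            _ ≤ _ := le_order_mul
    _ ≤ ((x' - x) * y' + x * (y' - y)).order := min_order_le_add
    _ = (x' * y' - x * y).order := by ring_nf

theorem le_order_pow_sub_pow {x x' : MvPowerSeries σ R} {k : ℕ∞}
    (hx : k ≤ x.order) (hx' : k + 1 ≤ (x' - x).order) (m : ℕ) :
    m * k + 1 ≤ (x' ^ m - x ^ m).order := by
  induction m with
  | zero => simp
  | succ m ih =>
    have hxm : m * k ≤ (x ^ m).order := by
      simpa using (nsmul_le_nsmul_right hx m).trans (le_order_pow m)
    calc ((m + 1 : ℕ) : ℕ∞) * k + 1 = k + m * k + 1 := by push_cast; ring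
      _ ≤ (x' * x' ^ m - x * x ^ m).order := le_order_mul_sub_mul hx hx' hxm ih
      _ = (x' ^ (m + 1) - x ^ (m + 1)).order := by rw [pow_succ', pow_succ']

theorem le_order_prod_sub_prod {ι : Type*} (s : Finset ι) {x x' : ι → MvPowerSeries σ R}
    {k : ι → ℕ∞} (hx : ∀ i ∈ s, k i ≤ (x i).order)
    (hx' : ∀ i ∈ s, k i + 1 ≤ (x' i - x i).order) :
    ∑ i ∈ s, k i + 1 ≤ (∏ i ∈ s, x' i - ∏ i ∈ s, x i).order := by
  classical
  induction s using Finset.induction_on with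
  | empty => simp
  | insert i s hi ih =>
    simp only [Finset.sum_insert hi, Finset.prod_insert hi, Finset.forall_mem_insert] at hx hx' ⊢
    exact le_order_mul_sub_mul hx.1 hx'.1 ((Finset.sum_le_sum hx.2).trans (le_order_prod _ _))
      (ih hx.2 hx'.2)

variable {a : σ → MvPowerSeries σ R}

theorem le_order_prod_pow_sub_prod_X_pow (ha : ∀ s, 2 ≤ (a s - X s).order) (e : σ →₀ ℕ) :
    (e.degree : ℕ∞) + 1 ≤ ((e.prod fun s k => a s ^ k) - e.prod fun s k => X s ^ k).order := by
  have hX : ∀ s, 1 ≤ (X s : MvPowerSeries σ R).order := fun s =>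
    one_le_order_iff_constCoeff_eq_zero.2 (constantCoeff_X s)
  rw [Finsupp.prod, Finsupp.prod, Finsupp.degree_apply]
  simpa using le_order_prod_sub_prod e.support (k := fun s => (e s : ℕ∞))
    (fun s _ => le_order_pow_of_constantCoeff_eq_zero _ (constantCoeff_X s))
    (fun s _ => by simpa using le_order_pow_sub_pow (hX s) (ha s) (e s))

theorem coeff_prod_pow_of_degree_le [DecidableEq σ] (ha : ∀ s, 2 ≤ (a s - X s).order)
    {d e : σ →₀ ℕ} (hde : d.degree ≤ e.degree) :
    coeff d (e.prod fun s k => a s ^ k) = if d = e then 1 else 0 := by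
  have hlt : (d.degree : ℕ∞) < e.degree + 1 := by exact_mod_cast Nat.lt_succ_of_le hde
  rw [← sub_add_cancel (e.prod fun s k => a s ^ k) (e.prod fun s k => X s ^ k), map_add,
    coeff_of_lt_order (hlt.trans_le (le_order_prod_pow_sub_prod_X_pow ha e)), zero_add,
    ← one_mul (e.prod _), ← map_one C, ← monomial_eq', coeff_monomial]

theorem le_order_subst_sub_self (ha : HasSubst a) (ha2 : ∀ s, 2 ≤ (a s - X s).order)
    (F : MvPowerSeries σ R) : F.order + 1 ≤ (subst a F - F).order := by
  classical
  refine le_order fun d hd => ?_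
  -- only `e = d` contributes to `coeff d (subst a F)`: either `coeff e F = 0`, or
  -- `d.degree ≤ e.degree` and then `a ^ e` has the same `d`-coefficient as `X ^ e`
  rw [map_sub, coeff_subst ha, finsum_eq_single _ d, coeff_prod_pow_of_degree_le ha2 le_rfl,
    if_pos rfl, smul_eq_mul, mul_one, sub_self]
  intro e hed
  by_cases hFe : coeff e F = 0
  · rw [hFe, zero_smul]
  · have hde : d.degree ≤ e.degree := by
      have := hd.trans_le (add_le_add (order_le hFe) le_rfl)
      exact Nat.le_of_lt_succ (by exact_mod_cast this)
    rw [coeff_prod_pow_of_degree_le ha2 hde, if_neg hed.symm, smul_zero]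

end Order

section Bijective

variable {T : Module.End R (MvPowerSeries σ R)}

theorem le_order_one_sub_apply (hT : ∀ F, F.order + 1 ≤ (T F).order) (F : MvPowerSeries σ R) :
    F.order ≤ ((1 - T) F).order :=
  calc F.order ≤ min F.order (-T F).order :=
        le_min le_rfl (by rw [order_neg]; exact le_self_add.trans (hT F))
    _ ≤ (F + -T F).order := min_order_le_add
    _ = ((1 - T) F).order := by simp [sub_eq_add_neg]

theorem le_order_pow_apply (hT : ∀ F, F.order + 1 ≤ (T F).order) (F : MvPowerSeries σ R)
    (j : ℕ) : (j : ℕ∞) ≤ ((T ^ j) F).order := by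
  induction j with
  | zero => simp
  | succ j ih =>
    rw [pow_succ', Module.End.mul_apply]
    push_cast
    exact (add_le_add ih le_rfl).trans (hT _)

theorem injective_one_sub_of_le_order (hT : ∀ F, F.order + 1 ≤ (T F).order) :
    Function.Injective ⇑(1 - T) := by
  refine (injective_iff_map_eq_zero _).2 fun F hF => ?_
  have hTF : T F = F := (sub_eq_zero.1 (by simpa using hF)).symm
  have h := hT F
  rw [hTF] at h
  by_contra hne
  exact (ENat.add_one_le_iff (order_eq_top_iff.not.2 hne)).1 h |>.false

theorem surjective_one_sub_of_le_order (hT : ∀ F, F.order + 1 ≤ (T F).order) :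
    Function.Surjective ⇑(1 - T) := by
  intro F
  set S : ℕ → MvPowerSeries σ R := fun N => (∑ j ∈ Finset.range N, T ^ j) F
  have hS : ∀ d N, d.degree + 1 ≤ N → coeff d (S N) = coeff d (S (d.degree + 1)) := by
    intro d N hN
    induction N, hN using Nat.le_induction with
    | base => rfl
    | succ N hN ih =>
      have h0 : coeff d ((T ^ N) F) = 0 :=
        coeff_of_lt_order ((by exact_mod_cast hN : (d.degree : ℕ∞) < N).trans_le
          (le_order_pow_apply hT F N))
      rw [← ih]
      simp only [S, Finset.sum_range_succ, LinearMap.add_apply, map_add, h0, add_zero]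
  -- `G = ∑ Tʲ F`: its coefficients in degree `m` are already those of the partial sum `S (m + 1)`
  let G : MvPowerSeries σ R := fun d => coeff d (S (d.degree + 1))
  have hG : ∀ N : ℕ, (N : ℕ∞) ≤ (G - S N).order := fun N => le_order fun d hd => by
    rw [map_sub, sub_eq_zero]
    exact (hS d N (by exact_mod_cast hd)).symm
  refine ⟨G, ext fun d => ?_⟩
  set N := d.degree + 1
  have hN : (d.degree : ℕ∞) < N := by exact_mod_cast d.degree.lt_succ_self
  have hSN : (1 - T) (S N) = F - (T ^ N) F := by
    rw [← Module.End.mul_apply, mul_neg_geom_sum, LinearMap.sub_apply, Module.End.one_apply]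
  calc coeff d ((1 - T) G) = coeff d ((1 - T) (S N)) + coeff d ((1 - T) (G - S N)) := by
        rw [← map_add, ← map_add, add_sub_cancel]
    _ = coeff d F := by
      rw [hSN, coeff_of_lt_order (hN.trans_le ((hG N).trans (le_order_one_sub_apply hT _))),
        map_sub, coeff_of_lt_order (hN.trans_le (le_order_pow_apply hT F N)), sub_zero, add_zero]

theorem bijective_one_sub_of_le_order (hT : ∀ F, F.order + 1 ≤ (T F).order) :
    Function.Bijective ⇑(1 - T) :=
  ⟨injective_one_sub_of_le_order hT, surjective_one_sub_of_le_order hT⟩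

end Bijective

section Subst

theorem bijective_subst {a : σ → MvPowerSeries σ R} (ha : HasSubst a)
    (ha2 : ∀ s, 2 ≤ (a s - X s).order) : Function.Bijective (subst (R := R) a) := by
  have hT : ∀ F, F.order + 1 ≤ ((1 - (substAlgHom (R := R) ha).toLinearMap) F).order :=
    fun F => by
      rw [LinearMap.sub_apply, Module.End.one_apply, AlgHom.toLinearMap_apply, substAlgHom_apply,
        ← neg_sub, order_neg]
      exact le_order_subst_sub_self ha ha2 F
  have := bijective_one_sub_of_le_order hT
  rwa [sub_sub_cancel, AlgHom.coe_toLinearMap, coe_substAlgHom] at this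

noncomputable def substAlgEquiv {a : σ → MvPowerSeries σ R} (ha : HasSubst a)
    (ha2 : ∀ s, 2 ≤ (a s - X s).order) : MvPowerSeries σ R ≃ₐ[R] MvPowerSeries σ R :=
  AlgEquiv.ofBijective (substAlgHom ha) (by simpa using bijective_subst ha ha2)

@[simp]
theorem coe_substAlgEquiv {a : σ → MvPowerSeries σ R} (ha : HasSubst a)
    (ha2 : ∀ s, 2 ≤ (a s - X s).order) : ⇑(substAlgEquiv ha ha2) = subst a :=
  coe_substAlgHom ha

theorem subst_congr {τ : Type*} {a b : σ → MvPowerSeries τ R} (ha : HasSubst a)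
    (hb : HasSubst b) {F : MvPowerSeries σ R}
    (h : ∀ d, coeff d F ≠ 0 → ∀ s ∈ d.support, a s = b s) : subst a F = subst b F := by
  ext e
  rw [coeff_subst ha, coeff_subst hb]
  refine finsum_congr fun d => ?_
  by_cases hd : coeff d F = 0
  · simp [hd]
  · rw [Finsupp.prod_congr fun s hs => by rw [h d hd s hs]]

end Subst

section Topology

open WithPiTopology

variable {τ : Type*} [UniformSpace R] [DiscreteUniformity R]

theorem hasSubst_of_continuous {ε : MvPowerSeries σ R →ₐ[R] MvPowerSeries τ R}
    (hε : Continuous ε) : HasSubst fun s => ε (X s) :=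
  hasSubst_iff_hasEval_of_discreteTopology.2 (HasEval.X.map hε)

theorem algHom_ext_of_continuous {ε₁ ε₂ : MvPowerSeries σ R →ₐ[R] MvPowerSeries τ R}
    (h₁ : Continuous ε₁) (h₂ : Continuous ε₂) (h : ∀ s, ε₁ (X s) = ε₂ (X s)) : ε₁ = ε₂ := by
  rw [← aeval_unique h₁, ← aeval_unique h₂]
  congr 1
  exact funext h

theorem eq_substAlgHom_of_continuous {ε : MvPowerSeries σ R →ₐ[R] MvPowerSeries τ R}
    (hε : Continuous ε) : ε = substAlgHom (hasSubst_of_continuous hε) :=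
  algHom_ext_of_continuous hε (by simpa using continuous_subst (hasSubst_of_continuous hε))
    fun s => by rw [substAlgHom_X]

theorem map_eq_self_of_continuous {ε : MvPowerSeries σ R →ₐ[R] MvPowerSeries σ R}
    (hε : Continuous ε) {i : σ} (hX : ∀ s, s ≠ i → ε (X s) = X s) {F : MvPowerSeries σ R}
    (hF : ∀ d, coeff d F ≠ 0 → d i = 0) : ε F = F := by
  rw [eq_substAlgHom_of_continuous hε, substAlgHom_apply,
    subst_congr (hasSubst_of_continuous hε) HasSubst.X, subst_self, id]
  intro d hd s hs
  exact hX s fun hsi => Finsupp.mem_support_iff.1 hs (hsi ▸ hF d hd)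

end Topology

end MvPowerSeries

section GAc

variable {R : Type*} [CommRing R] {n : ℕ}
  {φ ψ : MvPowerSeries (Fin n) R ≃ₐ[R] MvPowerSeries (Fin n) R}

theorem GAc.mul (hφ : GAc φ) (hψ : GAc ψ) : GAc (φ * ψ) := by
  let : UniformSpace R := ⊥
  let := mvPiTopology (Fin n) R
  refine ⟨hφ.1.comp hψ.1, fun i => ?_⟩
  rw [AlgEquiv.mul_apply, ← AlgEquiv.coe_toAlgHom,
    eq_substAlgHom_of_continuous (ε := φ.toAlgHom) hφ.1, substAlgHom_apply]
  exact constantCoeff_subst_eq_zero (hasSubst_of_continuous (ε := φ.toAlgHom) hφ.1) hφ.2 (hψ.2 i)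

theorem GAc.ext (hφ : GAc φ) (hψ : GAc ψ) (h : ∀ s, φ (X s) = ψ (X s)) : φ = ψ :=
  letI : UniformSpace R := ⊥
  AlgEquiv.coe_toAlgHom_injective (algHom_ext_of_continuous hφ.1 hψ.1 h)

theorem GAc.map_eq_self (hφ : GAc φ) {i : Fin n} (hX : ∀ s, s ≠ i → φ (X s) = X s)
    {F : MvPowerSeries (Fin n) R} (hF : ∀ d, coeff d F ≠ 0 → d i = 0) : φ F = F :=
  letI : UniformSpace R := ⊥
  map_eq_self_of_continuous (ε := φ.toAlgHom) hφ.1 hX hF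

theorem exists_gAc_apply_X_eq_update (i : Fin n) {p : MvPowerSeries (Fin n) R}
    (hp : 2 ≤ (p - X i).order) :
    ∃ φ, GAc φ ∧ φ (X i) = p ∧ ∀ s, s ≠ i → φ (X s) = X s := by
  let : UniformSpace R := ⊥
  have hp0 : constantCoeff p = 0 := by
    simpa using one_le_order_iff_constCoeff_eq_zero.1 (one_le_two.trans hp)
  have ha0 : ∀ s, constantCoeff (Function.update X i p s) = 0 := fun s => by
    by_cases hs : s = i <;> simp [hs, hp0]
  have ha2 : ∀ s, 2 ≤ (Function.update X i p s - X s).order := fun s => by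
    by_cases hs : s = i <;> simp [hs, hp]
  have ha := hasSubst_of_constantCoeff_zero ha0
  have hcont := continuous_subst (R := R) ha
  rw [← coe_substAlgEquiv ha ha2] at hcont
  exact ⟨substAlgEquiv ha ha2, ⟨hcont, fun s => by simpa [subst_X ha] using ha0 s⟩,
    by simp [subst_X ha], fun s hs => by simp [subst_X ha, hs]⟩

end GAc

theorem mul_mul_apply_X_eq_mul_apply_X {σ R : Type*} [CommRing R]
    {α β γ : MvPowerSeries σ R ≃ₐ[R] MvPowerSeries σ R} {i j : σ} (hij : j ≠ i)
    {f v : MvPowerSeries σ R} (hv : (1 + f) * v = 1)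
    (hαi : α (X i) = X i + X i * f) (hα : ∀ s, s ≠ i → α (X s) = X s) (hαf : α f = f)
    (hβi : β (X i) = X i * (1 + X j)) (hβ : ∀ s, s ≠ i → β (X s) = X s) (hβf : β f = f)
    (hγj : γ (X j) = (X j - f) * v) (hγ : ∀ s, s ≠ j → γ (X s) = X s) (s : σ) :
    (α * γ * β) (X s) = (β * γ) (X s) := by
  have fixes_v : ∀ φ : MvPowerSeries σ R ≃ₐ[R] MvPowerSeries σ R, φ f = f → φ v = v :=
    fun φ hφ => left_inv_eq_right_inv
      (by rw [← hφ, ← map_one φ, ← map_add, ← map_mul, mul_comm, hv, map_one]) hv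
  simp only [AlgEquiv.mul_apply]
  by_cases hsi : s = i
  · subst hsi
    rw [hβi, map_mul, map_add, map_one, hγ s hij.symm, hγj, map_mul, map_add, map_one, map_mul,
      map_sub, hαi, hα j hij, hαf, fixes_v α hαf, hβi]
    linear_combination (X s * (X j - f)) * hv
  · by_cases hsj : s = j
    · subst hsj
      rw [hβ s hsi, hγj, map_mul, map_sub, map_mul, map_sub, hα s hsi, hβ s hsi, hαf, hβf,
        fixes_v α hαf, fixes_v β hβf]
    · rw [hβ s hsi, hγ s hsj, hα s hsi, hβ s hsi]

/-- Lemma `x1f`, Step 1: if `f` does not involve `X₁` and all monomials of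
`f` have total degree `≥ 2`, then any `α ∈ GA^c_n(R)` with `α(X₁) = X₁ + X₁f` and
`α(Xᵢ) = Xᵢ` for `i ≥ 2` is a single commutator of elements of `GA^c_n(R)`. -/
theorem x1_mul_one_add_f_is_commutator {R : Type*} [CommRing R] {n : ℕ} (hn : 2 ≤ n)
    (f : MvPowerSeries (Fin n) R)
    (hf1 : ∀ d : Fin n →₀ ℕ, MvPowerSeries.coeff d f ≠ 0 → d ⟨0, by omega⟩ = 0)
    (hf2 : ∀ d : Fin n →₀ ℕ, MvPowerSeries.coeff d f ≠ 0 → 2 ≤ d.sum fun _ e => e)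
    (α : MvPowerSeries (Fin n) R ≃ₐ[R] MvPowerSeries (Fin n) R) (hα : GAc α)
    (hα1 : α (X ⟨0, by omega⟩) = X ⟨0, by omega⟩ + X ⟨0, by omega⟩ * f) (hαj : ∀ j, j ≠ ⟨0, by omega⟩ → α (X j) = X j) :
    ∃ β γ : MvPowerSeries (Fin n) R ≃ₐ[R] MvPowerSeries (Fin n) R,
      GAc β ∧ GAc γ ∧ α = β * γ * β⁻¹ * γ⁻¹ := by
  set i₀ : Fin n := ⟨0, by omega⟩
  set i₁ : Fin n := ⟨1, by omega⟩
  have hi : i₁ ≠ i₀ := by simp [i₀, i₁, Fin.ext_iff]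
  have hf : 2 ≤ f.order := le_order fun d hd => by
    by_contra h
    exact (hf2 d h).not_gt (by exact_mod_cast hd)
  have hf0 : constantCoeff f = 0 := one_le_order_iff_constCoeff_eq_zero.1 (one_le_two.trans hf)
  obtain ⟨v, hv⟩ : ∃ v, (1 + f) * v = 1 := ⟨_, mul_invOfUnit (1 + f) 1 (by simp [hf0])⟩
  have hX : ∀ i, 1 ≤ (X i : MvPowerSeries (Fin n) R).order := fun i =>
    one_le_order_iff_constCoeff_eq_zero.2 (constantCoeff_X i)
  obtain ⟨β, hβ, hβi₀, hβX⟩ :=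
    exists_gAc_apply_X_eq_update i₀ (p := (X i₀ * (1 + X i₁) : MvPowerSeries (Fin n) R)) <|
      calc (2 : ℕ∞) ≤ (X i₀).order + (X i₁).order := add_le_add (hX i₀) (hX i₁)
        _ ≤ (X i₀ * X i₁ : MvPowerSeries (Fin n) R).order := le_order_mul
        _ = _ := by ring_nf
  obtain ⟨γ, hγ, hγi₁, hγX⟩ := exists_gAc_apply_X_eq_update i₁ (p := (X i₁ - f) * v) <|
    calc (2 : ℕ∞) ≤ f.order + ((1 + X i₁) * v).order := le_add_right hf
      _ ≤ (f * ((1 + X i₁) * v)).order := le_order_mul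
      _ = ((X i₁ - f) * v - X i₁).order := by
        rw [← order_neg]; congr 1; linear_combination -X i₁ * hv
  have key : α * γ * β = β * γ := (hα.mul hγ).mul hβ |>.ext (hβ.mul hγ) <|
    mul_mul_apply_X_eq_mul_apply_X hi hv hα1 hαj (hα.map_eq_self hαj hf1) hβi₀ hβX
      (hβ.map_eq_self hβX hf1) hγi₁ hγX
  refine ⟨β, γ, hβ, hγ, ?_⟩
  calc α = α * γ * β * β⁻¹ * γ⁻¹ := by group
    _ = β * γ * β⁻¹ * γ⁻¹ := by rw [key]
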